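/- Let (X_i)_{i≥1} be i.i.d. random vectors in ℝ^d whose common law has density f₀, and let x, y ∈ ℝ^d be two points at which f₀ is continuous and strictly positive. For each m, let k_m ∈ ℕ with k_m → ∞ and k_m/m → 0, and let L_m(z) = inf{ r ≥ 0 : #{ i ≤ m : ‖X_i − z‖ ≤ r } ≥ k_m } denote the k_m-th nearest-neighbor distance of a point z to the sample. Then the anomaly evidence statistic D_m = d · (log L_m(x) − log L_m(y)) converges in probability, as m → ∞, to log( f₁(x) / f₀(x) ), where f₁ is the constant (uniform) density taking the value f₀(y); equivalently, D_m → log f₀(y) − log f₀(x) in probability. -/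

import Mathlib

/-!
A closed ball around `z` of Haar volume `v` contains a binomial number of the first `m` sample
points, with success probability `≈ f₀ z * v` by continuity of `f₀` at `z`. For
`v = c * (k / m) / f₀ z` the count is `≈ c * k` up to fluctuations of order `√k` (Chebyshev), so it
exceeds `k` with probability tending to one when `c > 1` and stays below `k` when `c < 1`. Hence
the volume of the ball of radius `L m z` is `(k / m) / f₀ z` up to a factor tending to one in
probability, i.e. `d * log (L m z) - log (k / m) → -log (V₁ * f₀ z)` with `V₁` the volume of the
unit ball. Subtracting this at `x` and at `y` cancels `log (k / m)` and `log V₁`.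
-/

open MeasureTheory ProbabilityTheory Filter

open Metric Topology

section KNearestNeighbor

variable {E : Type*} [PseudoMetricSpace E]

/-- Equals `0` when `k = 0` and, since no radius qualifies, also when `k > m`. -/
noncomputable def knnDist (k m : ℕ) (x : ℕ → E) (z : E) : ℝ :=
  sInf {r : ℝ | 0 ≤ r ∧ k ≤ ((Finset.range m).filter fun i => dist (x i) z ≤ r).card}

lemma knnDist_nonneg (k m : ℕ) (x : ℕ → E) (z : E) : 0 ≤ knnDist k m x z :=
  Real.sInf_nonneg fun _ hr => hr.1

lemma knnDist_le_iff {k m : ℕ} {x : ℕ → E} {z : E} (hkm : k ≤ m) {r : ℝ} (hr : 0 ≤ r) :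
    knnDist k m x z ≤ r ↔ k ≤ ((Finset.range m).filter fun i => dist (x i) z ≤ r).card := by
  set count : ℝ → ℕ := fun t => ((Finset.range m).filter fun i => dist (x i) z ≤ t).card
  have hmono : Monotone count := fun s t hst =>
    Finset.card_le_card <| Finset.monotone_filter_right _ fun _ _ h => h.trans hst
  have hbdd : BddBelow {r : ℝ | 0 ≤ r ∧ k ≤ count r} := ⟨0, fun _ hr => hr.1⟩
  refine ⟨fun h => ?_, fun h => csInf_le hbdd ⟨hr, h⟩⟩
  have hne : {r : ℝ | 0 ≤ r ∧ k ≤ count r}.Nonempty := by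
    obtain ⟨R, hR⟩ := ((Finset.range m).image fun i => dist (x i) z).bddAbove
    refine ⟨max R 0, le_max_right _ _, ?_⟩
    rwa [show count (max R 0) = m by
      simp only [count]
      rw [Finset.filter_true_of_mem fun i hi =>
        (hR (Finset.mem_image_of_mem _ hi)).trans (le_max_left _ _), Finset.card_range]]
  have hright : ∀ᶠ t in 𝓝[>] r, count t ≤ count r := by
    have : ∀ᶠ t in 𝓝[>] r, ∀ i ∈ Finset.range m, dist (x i) z ≤ t → dist (x i) z ≤ r := by
      refine (Filter.eventually_all_finset _).2 fun i _ => ?_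
      by_cases hi : dist (x i) z ≤ r
      · exact Eventually.of_forall fun _ _ => hi
      · exact ((eventually_lt_nhds (not_le.1 hi)).filter_mono nhdsWithin_le_nhds).mono
          fun t ht hit => absurd hit (not_le.2 ht)
    exact this.mono fun t ht => Finset.card_le_card (Finset.monotone_filter_right _ ht)
  obtain ⟨t, hcount, hrt⟩ := (hright.and self_mem_nhdsWithin).exists
  obtain ⟨s, hs, hst⟩ := exists_lt_of_csInf_lt hne (h.trans_lt hrt)
  exact hs.2.trans ((hmono hst.le).trans hcount)

lemma knnDist_pow_le_iff {k m n : ℕ} {x : ℕ → E} {z : E} (hn : n ≠ 0) (hkm : k ≤ m) {t : ℝ}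
    (ht : 0 ≤ t) :
    knnDist k m x z ^ n ≤ t ↔
      k ≤ ((Finset.range m).filter fun i => dist (x i) z ≤ t ^ (n : ℝ)⁻¹).card := by
  rw [← knnDist_le_iff hkm (by positivity), Real.le_rpow_inv_iff_of_pos (knnDist_nonneg ..) ht
    (by positivity), Real.rpow_natCast]

end KNearestNeighbor

section ConvergenceInMeasure

variable {α ι : Type*} [MeasurableSpace α] {μ : Measure α} {l : Filter ι}

lemma tendsto_measure_zero_of_eventually_subset {s t : ι → Set α}
    (ht : Tendsto (fun i => μ (t i)) l (𝓝 0)) (hst : ∀ᶠ i in l, s i ⊆ t i) :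
    Tendsto (fun i => μ (s i)) l (𝓝 0) :=
  tendsto_of_tendsto_of_tendsto_of_le_of_le' tendsto_const_nhds ht
    (Eventually.of_forall fun _ => zero_le) (hst.mono fun _ h => measure_mono h)

lemma tendsto_measure_union_zero {s t : ι → Set α} (hs : Tendsto (fun i => μ (s i)) l (𝓝 0))
    (ht : Tendsto (fun i => μ (t i)) l (𝓝 0)) : Tendsto (fun i => μ (s i ∪ t i)) l (𝓝 0) := by
  have hsum := hs.add ht
  rw [add_zero] at hsum
  exact tendsto_of_tendsto_of_tendsto_of_le_of_le tendsto_const_nhds hsum (fun _ => zero_le)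
    fun _ => measure_union_le _ _

lemma TendstoInMeasure.sub {E : Type*} [SeminormedAddCommGroup E] {f f' : ι → α → E}
    {g g' : α → E} (hf : TendstoInMeasure μ f l g) (hf' : TendstoInMeasure μ f' l g') :
    TendstoInMeasure μ (f - f') l (g - g') := by
  rw [tendstoInMeasure_iff_norm] at *
  intro ε hε
  refine tendsto_measure_zero_of_eventually_subset
    (tendsto_measure_union_zero (hf _ (half_pos hε)) (hf' _ (half_pos hε)))
    (Eventually.of_forall fun i x hx => ?_)
  by_contra hout
  simp only [Set.mem_union, Set.mem_ofPred_eq, Pi.sub_apply, not_or, not_le] at hx hout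
  have := norm_sub_le (f i x - g x) (f' i x - g' x)
  rw [sub_sub_sub_comm] at this
  linarith

lemma TendstoInMeasure.tendsto_measure_le_of_lt {Z : ι → α → ℝ} {a c : ℝ}
    (h : TendstoInMeasure μ Z l fun _ => c) (hac : a < c) :
    Tendsto (fun i => μ {x | Z i x ≤ a}) l (𝓝 0) :=
  tendsto_measure_zero_of_eventually_subset (tendstoInMeasure_iff_dist.1 h _ (sub_pos.2 hac))
    (Eventually.of_forall fun i x (hx : Z i x ≤ a) => by
      simp only [Set.mem_ofPred_eq, Real.dist_eq]
      exact (by linarith : c - a ≤ -(Z i x - c)).trans (neg_le_abs _))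

lemma TendstoInMeasure.tendsto_measure_ge_of_gt {Z : ι → α → ℝ} {a c : ℝ}
    (h : TendstoInMeasure μ Z l fun _ => c) (hca : c < a) :
    Tendsto (fun i => μ {x | a ≤ Z i x}) l (𝓝 0) :=
  tendsto_measure_zero_of_eventually_subset (tendstoInMeasure_iff_dist.1 h _ (sub_pos.2 hca))
    (Eventually.of_forall fun i x (hx : a ≤ Z i x) => by
      simp only [Set.mem_ofPred_eq, Real.dist_eq]
      exact (by linarith : a - c ≤ Z i x - c).trans (le_abs_self _))

lemma tendstoInMeasure_log_sub_log {Y : ι → α → ℝ} {q : ι → ℝ} {b : ℝ} (hb : 0 < b)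
    (hq : ∀ᶠ i in l, 0 < q i)
    (hlow : ∀ c, 0 < c → c < 1 → Tendsto (fun i => μ {x | Y i x ≤ c * b * q i}) l (𝓝 0))
    (hup : ∀ c, 1 < c → Tendsto (fun i => μ {x | c * b * q i < Y i x}) l (𝓝 0)) :
    TendstoInMeasure μ (fun i x => Real.log (Y i x) - Real.log (q i)) l
      (fun _ => Real.log b) := by
  rw [tendstoInMeasure_iff_dist]
  intro ε hε
  have hε2 := half_pos hε
  refine tendsto_measure_zero_of_eventually_subset (tendsto_measure_union_zero
    (hlow _ (Real.exp_pos _) (Real.exp_lt_one_iff.2 (neg_neg_of_pos hε2)))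
    (hup _ (Real.one_lt_exp_iff.2 hε2))) ?_
  filter_upwards [hq] with i hqi x hx
  by_contra hout
  simp only [Set.mem_union, Set.mem_ofPred_eq, not_or, not_le, not_lt, Real.dist_eq] at hx hout
  have hlog (t : ℝ) : Real.log (Real.exp t * b * q i) = t + Real.log b + Real.log (q i) := by
    rw [Real.log_mul (by positivity) hqi.ne', Real.log_mul (by positivity) hb.ne', Real.log_exp]
  have hlo := Real.log_lt_log (by positivity) hout.1
  have hhi := Real.log_le_log ((by positivity : (0:ℝ) < _ * b * q i).trans hout.1) hout.2
  rw [hlog] at hlo hhi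
  have : |Real.log (Y i x) - Real.log (q i) - Real.log b| < ε :=
    abs_sub_lt_iff.2 ⟨by linarith, by linarith⟩
  linarith

end ConvergenceInMeasure

section Counting

variable {Ω E : Type*} [MeasurableSpace Ω] [MeasurableSpace E] {μ : Measure Ω}
  [IsProbabilityMeasure μ] {X : ℕ → Ω → E}

open scoped Classical in
lemma measureReal_abs_card_filter_sub_ge_le (hX : ∀ i, Measurable (X i))
    (hindep : Pairwise fun i j => IndepFun (X i) (X j) μ) {B : Set E} (hB : MeasurableSet B)
    {p : ℝ} (hp : ∀ i, μ.real (X i ⁻¹' B) = p) (m : ℕ) {δ : ℝ} (hδ : 0 < δ) :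
    μ.real {ω | δ ≤ |(((Finset.range m).filter fun i => X i ω ∈ B).card : ℝ) - m * p|} ≤
      m * p / δ ^ 2 := by
  set Y : ℕ → Ω → ℝ := fun i => (X i ⁻¹' B).indicator 1
  have hY : ∀ i, MemLp (Y i) 2 μ := fun i =>
    memLp_indicator_const 2 (hX i hB) 1 (Or.inr (measure_ne_top _ _))
  have hcard : ∀ ω, (((Finset.range m).filter fun i => X i ω ∈ B).card : ℝ) =
      (∑ i ∈ Finset.range m, Y i) ω := fun ω => by
    rw [Finset.natCast_card_filter, Finset.sum_apply]
    simp [Y, Set.indicator_apply]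
  have hmean : μ[∑ i ∈ Finset.range m, Y i] = m * p := by
    simp only [Finset.sum_apply]
    rw [integral_finsetSum _ fun i _ => (hY i).integrable one_le_two]
    simp [Y, integral_indicator_one (hX _ hB), hp]
  have hvar : variance (∑ i ∈ Finset.range m, Y i) μ ≤ m * p := by
    rw [IndepFun.variance_sum (fun i _ => hY i) fun i _ j _ hij =>
      (hindep hij).comp (measurable_one.indicator hB) (measurable_one.indicator hB)]
    calc ∑ i ∈ Finset.range m, variance (Y i) μ ≤ ∑ _i ∈ Finset.range m, p := by
          refine Finset.sum_le_sum fun i _ => (variance_le_expectation_sq (hY i).1).trans_eq ?_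
          rw [← hp i, ← integral_indicator_one (hX i hB)]
          congr 1
          ext ω
          by_cases h : ω ∈ X i ⁻¹' B <;> simp [Y, h]
      _ = m * p := by simp
  have hcheb := meas_ge_le_variance_div_sq (memLp_finsetSum' (Finset.range m) fun i _ => hY i) hδ
  simp_rw [hmean, ← hcard] at hcheb
  exact (ENNReal.toReal_le_of_le_ofReal (div_nonneg (variance_nonneg _ _) (sq_nonneg _))
    hcheb).trans (div_le_div_of_nonneg_right hvar (by positivity))

open scoped Classical in
lemma tendstoInMeasure_card_filter_mem_div (hX : ∀ i, Measurable (X i))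
    (hindep : Pairwise fun i j => IndepFun (X i) (X j) μ) {B : ℕ → Set E}
    (hB : ∀ m, MeasurableSet (B m)) {p : ℕ → ℝ} (hp : ∀ m i, μ.real (X i ⁻¹' B m) = p m)
    {k : ℕ → ℕ} (hk : Tendsto k atTop atTop) {c : ℝ}
    (hc : Tendsto (fun m => m * p m / k m) atTop (𝓝 c)) :
    TendstoInMeasure μ
      (fun m ω => (((Finset.range m).filter fun i => X i ω ∈ B m).card : ℝ) / k m) atTop
      (fun _ => c) := by
  rw [tendstoInMeasure_iff_measureReal_dist]
  intro ε hε
  have hbound : Tendsto (fun m => m * p m / k m * (4 / ε ^ 2) / k m) atTop (𝓝 0) :=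
    (hc.mul_const _).div_atTop (tendsto_natCast_atTop_atTop.comp hk)
  refine squeeze_zero' (Eventually.of_forall fun _ => measureReal_nonneg) ?_ hbound
  filter_upwards [hc.eventually (ball_mem_nhds c (half_pos hε)), hk.eventually_gt_atTop 0]
    with m hmean hkpos
  have hkpos' : (0 : ℝ) < k m := Nat.cast_pos.2 hkpos
  calc _ ≤ μ.real {ω | ε / 2 * k m ≤
          |(((Finset.range m).filter fun i => X i ω ∈ B m).card : ℝ) - m * p m|} := by
        refine measureReal_mono fun ω hω => ?_
        simp only [Set.mem_ofPred_eq, Real.dist_eq] at hω hmean ⊢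
        have := abs_sub_le ((((Finset.range m).filter fun i => X i ω ∈ B m).card : ℝ) / k m)
          (m * p m / k m) c
        rw [← sub_div, abs_div, abs_of_pos hkpos'] at this
        rw [← le_div_iff₀ hkpos']
        linarith
    _ ≤ m * p m / (ε / 2 * k m) ^ 2 :=
        measureReal_abs_card_filter_sub_ge_le hX hindep (hB m) (hp m) m (by positivity)
    _ = m * p m / k m * (4 / ε ^ 2) / k m := by
        field_simp
        ring

end Counting

section Density

variable {α : Type*} [MeasurableSpace α] (μ : Measure α) {f : α → ℝ}

lemma abs_measureReal_withDensity_sub_le {s : Set α} (hs : MeasurableSet s) (hμs : μ s ≠ ⊤)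
    {a ε : ℝ} (ha : 0 ≤ a) (hε : 0 ≤ ε) (hf : ∀ w ∈ s, |f w - a| ≤ ε) :
    |(μ.withDensity fun w => ENNReal.ofReal (f w)).real s - a * μ.real s| ≤ ε * μ.real s := by
  have hlow : ENNReal.ofReal (a - ε) * μ s ≤ μ.withDensity (fun w => ENNReal.ofReal (f w)) s := by
    rw [withDensity_apply _ hs, ← setLIntegral_const]
    exact setLIntegral_mono' hs fun w hw =>
      ENNReal.ofReal_le_ofReal (by linarith [(abs_le.1 (hf w hw)).1])
  have hup : μ.withDensity (fun w => ENNReal.ofReal (f w)) s ≤ ENNReal.ofReal (a + ε) * μ s := by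
    rw [withDensity_apply _ hs, ← setLIntegral_const]
    exact setLIntegral_mono' hs fun w hw =>
      ENNReal.ofReal_le_ofReal (by linarith [(abs_le.1 (hf w hw)).2])
  have hfin : ENNReal.ofReal (a + ε) * μ s ≠ ⊤ := ENNReal.mul_ne_top ENNReal.ofReal_ne_top hμs
  have h1 := ENNReal.toReal_mono (ne_top_of_le_ne_top hfin hup) hlow
  have h2 := ENNReal.toReal_mono hfin hup
  rw [ENNReal.toReal_mul, ENNReal.toReal_ofReal', ← measureReal_def, ← measureReal_def] at h1 h2
  rw [max_eq_left (by linarith)] at h2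
  rw [abs_le]
  constructor <;> nlinarith [le_max_left (a - ε) 0, measureReal_nonneg (μ := μ) (s := s)]

section Metric

variable [PseudoMetricSpace α] [ProperSpace α] [IsFiniteMeasureOnCompacts μ] [μ.IsOpenPosMeasure]

lemma measureReal_ball_pos (x : α) {r : ℝ} (hr : 0 < r) : 0 < μ.real (ball x r) :=
  ENNReal.toReal_pos (measure_ball_pos μ x hr).ne' measure_ball_lt_top.ne

lemma tendsto_measureReal_withDensity_closedBall_div [OpensMeasurableSpace α] {z : α}
    (hf : ContinuousAt f z) (hfz : 0 ≤ f z) :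
    Tendsto (fun r => (μ.withDensity fun w => ENNReal.ofReal (f w)).real (closedBall z r) /
      μ.real (closedBall z r)) (𝓝[>] 0) (𝓝 (f z)) := by
  rw [Metric.tendsto_nhds]
  intro ε hε
  obtain ⟨δ, hδ, hfδ⟩ := Metric.continuousAt_iff.1 hf (ε / 2) (half_pos hε)
  filter_upwards [Ioo_mem_nhdsGT hδ] with r ⟨hr, hrδ⟩
  have hV : 0 < μ.real (closedBall z r) :=
    ENNReal.toReal_pos (measure_closedBall_pos μ z hr).ne' measure_closedBall_lt_top.ne
  have := abs_measureReal_withDensity_sub_le μ measurableSet_closedBall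
    measure_closedBall_lt_top.ne hfz (half_pos hε).le fun w hw =>
      (hfδ ((mem_closedBall.1 hw).trans_lt hrδ)).le
  rw [mul_comm (f z)] at this
  rw [Real.dist_eq, div_sub' hV.ne', abs_div, abs_of_pos hV, div_lt_iff₀ hV]
  linarith [mul_pos hε hV]

end Metric

end Density

section Haar

open Module

variable {E : Type*} [NormedAddCommGroup E] [NormedSpace ℝ E] [FiniteDimensional ℝ E]
  [MeasurableSpace E] [BorelSpace E] (μ : Measure E) [μ.IsAddHaarMeasure]
  {Ω : Type*} [MeasurableSpace Ω] {P : Measure Ω} [IsProbabilityMeasure P] {X : ℕ → Ω → E}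
  {f : E → ℝ} {z : E} {k : ℕ → ℕ}

open scoped Classical in
lemma tendstoInMeasure_card_closedBall_div (hn : finrank ℝ E ≠ 0) (hX : ∀ i, Measurable (X i))
    (hindep : Pairwise fun i j => IndepFun (X i) (X j) P)
    (hlaw : ∀ i, P.map (X i) = μ.withDensity fun w => ENNReal.ofReal (f w))
    (hf : ContinuousAt f z) (hfz : 0 < f z) (hk : Tendsto k atTop atTop)
    (hk0 : Tendsto (fun m => (k m : ℝ) / m) atTop (𝓝 0)) {c : ℝ} (hc : 0 < c) :
    TendstoInMeasure P (fun m ω => (((Finset.range m).filter fun i => X i ω ∈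
        closedBall z ((c * (μ.real (ball 0 1) * f z)⁻¹ * (k m / m)) ^ (finrank ℝ E : ℝ)⁻¹)).card
          : ℝ) / k m) atTop (fun _ => c) := by
  set V₁ := μ.real (ball (0 : E) 1) with hV₁def
  set r : ℕ → ℝ := fun m => (c * (V₁ * f z)⁻¹ * (k m / m)) ^ (finrank ℝ E : ℝ)⁻¹
  have hV₁ : 0 < V₁ := measureReal_ball_pos μ 0 one_pos
  have hq : ∀ᶠ m in atTop, 0 < (k m : ℝ) / m := by
    filter_upwards [hk.eventually_gt_atTop 0, eventually_gt_atTop 0] with m hkm hm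
    positivity
  have hr : Tendsto r atTop (𝓝[>] 0) := by
    refine tendsto_nhdsWithin_iff.2
      ⟨?_, hq.mono fun m hm => Real.rpow_pos_of_pos (by positivity) _⟩
    simpa [Real.zero_rpow (inv_ne_zero (Nat.cast_ne_zero.2 hn))] using
      (tendsto_const_nhds.mul hk0).rpow_const (p := (finrank ℝ E : ℝ)⁻¹) (Or.inr (by positivity))
  have hvol : ∀ m, μ.real (closedBall z (r m)) = c * (k m / m) / f z := fun m => by
    rw [Measure.addHaar_real_closedBall μ z (by positivity), Real.rpow_inv_natCast_pow
      (by positivity) hn, ← hV₁def]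
    field_simp
  refine tendstoInMeasure_card_filter_mem_div hX hindep (B := fun m => closedBall z (r m))
    (p := fun m => (μ.withDensity fun w => ENNReal.ofReal (f w)).real (closedBall z (r m)))
    (fun _ => measurableSet_closedBall)
    (fun m i => by rw [← map_measureReal_apply (hX i) measurableSet_closedBall, hlaw i]) hk ?_
  clear_value r
  have := ((tendsto_measureReal_withDensity_closedBall_div μ hf hfz.le).comp hr).const_mul
    (c / f z)
  rw [div_mul_cancel₀ _ hfz.ne'] at this
  refine this.congr' (hq.mono fun m hm => ?_)
  simp only [Function.comp, hvol]
  field_simp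

open scoped Classical in
theorem tendstoInMeasure_finrank_mul_log_knnDist (hn : finrank ℝ E ≠ 0)
    (hX : ∀ i, Measurable (X i)) (hindep : Pairwise fun i j => IndepFun (X i) (X j) P)
    (hlaw : ∀ i, P.map (X i) = μ.withDensity fun w => ENNReal.ofReal (f w))
    (hf : ContinuousAt f z) (hfz : 0 < f z) (hk : Tendsto k atTop atTop)
    (hk0 : Tendsto (fun m => (k m : ℝ) / m) atTop (𝓝 0)) :
    TendstoInMeasure P (fun m ω => finrank ℝ E * Real.log (knnDist (k m) m (fun i => X i ω) z) -
      Real.log (k m / m)) atTop (fun _ => -Real.log (μ.real (ball 0 1) * f z)) := by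
  have hV₁ : 0 < μ.real (ball (0 : E) 1) := measureReal_ball_pos μ 0 one_pos
  have hq : ∀ᶠ m in atTop, 0 < (k m : ℝ) / m := by
    filter_upwards [hk.eventually_gt_atTop 0, eventually_gt_atTop 0] with m hkm hm
    positivity
  have hkm : ∀ᶠ m in atTop, k m ≤ m := by
    filter_upwards [hk0.eventually_lt_const one_pos, eventually_gt_atTop 0] with m hm hm0
    exact_mod_cast ((div_lt_one (Nat.cast_pos.2 hm0)).1 hm).le
  have hevent : ∀ c, 0 < c → ∀ᶠ m in atTop, ∀ ω,
      knnDist (k m) m (fun i => X i ω) z ^ finrank ℝ E ≤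
          c * (μ.real (ball 0 1) * f z)⁻¹ * (k m / m) ↔
        k m ≤ ((Finset.range m).filter fun i => X i ω ∈ closedBall z
          ((c * (μ.real (ball 0 1) * f z)⁻¹ * (k m / m)) ^ (finrank ℝ E : ℝ)⁻¹)).card := by
    intro c hc
    filter_upwards [hkm] with m hm ω
    rw [knnDist_pow_le_iff hn hm (by positivity)]
    simp only [mem_closedBall]
  convert tendstoInMeasure_log_sub_log (μ := P) (l := atTop)
    (Y := fun m ω => knnDist (k m) m (fun i => X i ω) z ^ finrank ℝ E)
    (inv_pos.2 (mul_pos hV₁ hfz)) hq ?_ ?_ using 2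
  · funext ω
    rw [Real.log_pow]
  · rw [Real.log_inv]
  · intro c hc hc1
    refine tendsto_measure_zero_of_eventually_subset (TendstoInMeasure.tendsto_measure_ge_of_gt
      (tendstoInMeasure_card_closedBall_div μ hn hX hindep hlaw hf hfz hk hk0 hc) hc1) ?_
    filter_upwards [hevent c hc, hk.eventually_gt_atTop 0] with m hm hkpos ω hω
    simp only [Set.mem_ofPred_eq] at hω ⊢
    exact (one_le_div (Nat.cast_pos.2 hkpos)).2 (by exact_mod_cast (hm ω).1 hω)
  · intro c hc1
    have hc : 0 < c := one_pos.trans hc1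
    refine tendsto_measure_zero_of_eventually_subset (TendstoInMeasure.tendsto_measure_le_of_lt
      (tendstoInMeasure_card_closedBall_div μ hn hX hindep hlaw hf hfz hk hk0 hc) hc1) ?_
    filter_upwards [hevent c hc, hk.eventually_gt_atTop 0] with m hm hkpos ω hω
    simp only [Set.mem_ofPred_eq] at hω ⊢
    refine (div_le_one (Nat.cast_pos.2 hkpos)).2 ?_
    exact_mod_cast (not_le.1 fun h => (not_le.2 hω) ((hm ω).2 h)).le

end Haar

theorem odit_evidence_tendsto_llr_general
    {d : ℕ} {Ω : Type*} [MeasureSpace Ω] [IsProbabilityMeasure (ℙ : Measure Ω)]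
    (X : ℕ → Ω → EuclideanSpace ℝ (Fin d))
    (f₀ : EuclideanSpace ℝ (Fin d) → ℝ)
    (hmeas : ∀ i, Measurable (X i))
    (hindep : iIndepFun X ℙ)
    (hdist : ∀ i, Measure.map (X i) ℙ = volume.withDensity (fun z => ENNReal.ofReal (f₀ z)))
    (x y : EuclideanSpace ℝ (Fin d))
    (hcontx : ContinuousAt f₀ x) (hposx : 0 < f₀ x)
    (hconty : ContinuousAt f₀ y) (hposy : 0 < f₀ y)
    (k : ℕ → ℕ) (hktop : Tendsto k atTop atTop)
    (hk0 : Tendsto (fun m : ℕ => (k m : ℝ) / m) atTop (nhds 0))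
    (L : ℕ → EuclideanSpace ℝ (Fin d) → Ω → ℝ)
    (hL : ∀ m z ω, L m z ω = sInf {r : ℝ | 0 ≤ r ∧
      k m ≤ ((Finset.range m).filter (fun i => dist (X i ω) z ≤ r)).card})
    (f₁ : EuclideanSpace ℝ (Fin d) → ℝ) (hf₁ : ∀ z, f₁ z = f₀ y) :
    TendstoInMeasure ℙ
      (fun m ω => (d : ℝ) * (Real.log (L m x ω) - Real.log (L m y ω)))
      atTop (fun _ => Real.log (f₁ x / f₀ x)) := by
  rcases eq_or_ne d 0 with rfl | hd
  · obtain rfl : x = y := Subsingleton.elim x y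
    simp only [hf₁, div_self hposx.ne', Real.log_one, Nat.cast_zero, zero_mul]
    exact tendstoInMeasure_of_tendsto_ae (fun _ => aestronglyMeasurable_const)
      (ae_of_all _ fun _ => tendsto_const_nhds)
  have hpair : Pairwise fun i j => IndepFun (X i) (X j) ℙ := fun _ _ hij => hindep.indepFun hij
  have hn : Module.finrank ℝ (EuclideanSpace ℝ (Fin d)) ≠ 0 := by simpa using hd
  have hx := tendstoInMeasure_finrank_mul_log_knnDist volume hn hmeas hpair hdist hcontx hposx
    hktop hk0
  have hy := tendstoInMeasure_finrank_mul_log_knnDist volume hn hmeas hpair hdist hconty hposy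
    hktop hk0
  rw [finrank_euclideanSpace_fin] at hx hy
  have hLknn : ∀ m z ω, L m z ω = knnDist (k m) m (fun i => X i ω) z := hL
  have hV₁ : 0 < volume.real (ball (0 : EuclideanSpace ℝ (Fin d)) 1) :=
    measureReal_ball_pos volume 0 one_pos
  convert TendstoInMeasure.sub hx hy using 1
  · funext m ω
    simp only [Pi.sub_apply, hLknn]
    ring
  · funext
    rw [hf₁, Real.log_div hposy.ne' hposx.ne', Real.log_mul hV₁.ne' hposx.ne',
      Real.log_mul hV₁.ne' hposy.ne', Pi.sub_apply]
    ring

/-- Theorem 1 of the paper (asymptotic convergence of the ODIT anomaly evidence): for i.i.d.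
samples `X i` in `ℝ^d` with common density `f₀`, continuous and positive at both `x` and `y`,
and `k m → ∞` with `k m / m → 0`, the anomaly evidence
`D m = d · (log L m x − log L m y)`, where `L m z` is the `k m`-th nearest-neighbor distance
of `z` to the first `m` samples, converges in probability to
`log (f₁ x / f₀ x) = log (f₀ y) − log (f₀ x)`, where `f₁` is the constant (uniform) density
with value `f₀ y`. -/
theorem odit_evidence_tendsto_llr
    {d : ℕ} {Ω : Type*} [MeasureSpace Ω] [IsProbabilityMeasure (ℙ : Measure Ω)]
    (X : ℕ → Ω → EuclideanSpace ℝ (Fin d))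
    (f₀ : EuclideanSpace ℝ (Fin d) → ℝ) (hf₀ : ∀ z, 0 ≤ f₀ z)
    (hmeas : ∀ i, Measurable (X i))
    (hindep : iIndepFun X ℙ)
    (hdist : ∀ i, Measure.map (X i) ℙ = volume.withDensity (fun z => ENNReal.ofReal (f₀ z)))
    (x y : EuclideanSpace ℝ (Fin d))
    (hcontx : ContinuousAt f₀ x) (hposx : 0 < f₀ x)
    (hconty : ContinuousAt f₀ y) (hposy : 0 < f₀ y)
    (k : ℕ → ℕ) (hktop : Tendsto k atTop atTop)
    (hk0 : Tendsto (fun m : ℕ => (k m : ℝ) / m) atTop (nhds 0))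
    (L : ℕ → EuclideanSpace ℝ (Fin d) → Ω → ℝ)
    (hL : ∀ m z ω, L m z ω = sInf {r : ℝ | 0 ≤ r ∧
      k m ≤ ((Finset.range m).filter (fun i => dist (X i ω) z ≤ r)).card})
    (f₁ : EuclideanSpace ℝ (Fin d) → ℝ) (hf₁ : ∀ z, f₁ z = f₀ y) :
    TendstoInMeasure ℙ
      (fun m ω => (d : ℝ) * (Real.log (L m x ω) - Real.log (L m y ω)))
      atTop (fun _ => Real.log (f₁ x / f₀ x)) :=
  odit_evidence_tendsto_llr_general X f₀ hmeas hindep hdist x y hcontx hposx hconty hposy k hktop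
    hk0 L hL f₁ hf₁
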